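/- Let p = 2, so q = 2^s and F = GF(2^s). The binary code of the Type II ℓ=3 graph P(2,s) has minimum distance exactly q + 2. In particular, for every c ∈ F \ {0}, the indicator vector of the set {r, (x,0), (0,0)} ∪ {(y, c·y^{−1}) : y ∈ F \ {0}} is a codeword of Hamming weight q + 2. -/

import Mathlib

/-!
A nonzero codeword has weight at least `q + 2`, over any coefficients. If the root `r` is
nonzero, each constraint `c_i` forces a nonzero point on row `i`, and `c_x` a nonzero `(x, j)`.
If `r` vanishes but some `(x, a)` does not, `c_x` forces a second nonzero `(x, a')`, and each of
the `q` disjoint lines `(a, b)'` carries a nonzero point. Otherwise a nonzero point `(i₀, j₀)`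
forces a second nonzero point on row `i₀` and on each of the `q` lines `(a, j₀ + i₀ a)'` through
it, and these lie off row `i₀` and are pairwise distinct.

In characteristic `2` the vector `cw F c` attains the bound. On the line `(a, b)'` its support
consists of the roots of `a i² + b i = c`, together with `(0, 0)` when `b = 0`. The number of
roots is `[a = 0] + [b = 0]` mod `2`: they pair up under `i ↦ i + b / a` when `a b ≠ 0`, and
there is exactly one root when just one of `a`, `b` vanishes, squaring being bijective. So the
line meets the support in `[a = 0]` points mod `2`, which is the value of `cw F c` at `(x, a)`.
-/

open scoped Classical

namespace TypeII3

/-- Variable nodes of the Type II ℓ=3 graph: the root `r`, the nodes `(x,j)` (j ∈ F, with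
`x` a formal symbol), and the nodes `(i,j)` (i, j ∈ F). -/
abbrev VN (F : Type*) := Unit ⊕ (F ⊕ (F × F))

/-- Constraint nodes of the Type II ℓ=3 graph: `c_x`, the nodes `c_i` (i ∈ F), and the
nodes `(a,b)'` (a, b ∈ F). -/
abbrev CN (F : Type*) := Unit ⊕ (F ⊕ (F × F))

/-- Adjacency of the Type II ℓ=3 graph `P(p,s)`:
`r ~ c_x`; `r ~ c_i`; `c_x ~ (x,j)`; `c_i ~ (i,j)`; `(x,j) ~ (j,b)'` for every `b`; and
`(i,j) ~ (a, j + i·a)'` for every `a`. -/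
def adj (F : Type*) [Field F] : VN F → CN F → Prop
  | Sum.inl _, Sum.inl _ => True                             -- r ~ c_x
  | Sum.inl _, Sum.inr (Sum.inl _) => True                   -- r ~ c_i
  | Sum.inl _, Sum.inr (Sum.inr _) => False
  | Sum.inr (Sum.inl _), Sum.inl _ => True                   -- (x,j) ~ c_x
  | Sum.inr (Sum.inl _), Sum.inr (Sum.inl _) => False
  | Sum.inr (Sum.inl j), Sum.inr (Sum.inr (a, _)) => a = j   -- (x,j) ~ (j,b)'
  | Sum.inr (Sum.inr _), Sum.inl _ => False
  | Sum.inr (Sum.inr (i, _)), Sum.inr (Sum.inl k) => k = i   -- c_i ~ (i,j)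
  | Sum.inr (Sum.inr (i, j)), Sum.inr (Sum.inr (a, b)) => b = j + i * a

end TypeII3

/-- Hamming weight of a vector: the number of nonzero coordinates. -/
noncomputable def hamWt {V K : Type*} [Zero K] (x : V → K) : ℕ :=
  Nat.card {v : V // x v ≠ 0}

namespace TypeII3

/-- The code of the Type II ℓ=3 graph over `K`. -/
def InCode (F : Type*) [Field F] [Fintype F] (K : Type*) [AddCommMonoid K]
    (x : VN F → K) : Prop :=
  ∀ c : CN F, (∑ v : VN F, if adj F v c then x v else 0) = 0

/-- The minimum distance of the code of the Type II ℓ=3 graph over `K`. -/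
noncomputable def dmin (F : Type*) [Field F] [Fintype F]
    (K : Type*) [AddCommMonoid K] : ℕ :=
  sInf {w | ∃ x : VN F → K, InCode F K x ∧ x ≠ 0 ∧ hamWt x = w}

end TypeII3

/-- The indicator vector of `{r, (x,0), (0,0)} ∪ {(y, c·y⁻¹) : y ∈ F \ {0}}`. -/
noncomputable def cw (F : Type*) [Field F] (c : F) : TypeII3.VN F → ZMod 2
  | Sum.inl _ => 1
  | Sum.inr (Sum.inl j) => if j = 0 then 1 else 0
  | Sum.inr (Sum.inr (i, j)) =>
      if (i = 0 ∧ j = 0) ∨ (i ≠ 0 ∧ j = c * i⁻¹) then 1 else 0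

open Finset

namespace TypeII3

section Code

variable {F : Type*} [Field F] [Fintype F] {K : Type*} [AddCommMonoid K]

lemma sum_adj_inl (x : VN F → K) :
    (∑ v : VN F, if adj F v (Sum.inl ()) then x v else 0)
      = x (Sum.inl ()) + ∑ j : F, x (Sum.inr (Sum.inl j)) := by
  simp [Fintype.sum_sum_type, adj]

lemma sum_adj_inr_inl (x : VN F → K) (k : F) :
    (∑ v : VN F, if adj F v (Sum.inr (Sum.inl k)) then x v else 0)
      = x (Sum.inl ()) + ∑ j : F, x (Sum.inr (Sum.inr (k, j))) := by
  simp [Fintype.sum_sum_type, adj, Fintype.sum_prod_type_right, eq_comm (a := k)]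

lemma sum_adj_inr_inr (x : VN F → K) (a b : F) :
    (∑ v : VN F, if adj F v (Sum.inr (Sum.inr (a, b))) then x v else 0)
      = x (Sum.inr (Sum.inl a)) + ∑ i : F, x (Sum.inr (Sum.inr (i, b - i * a))) := by
  simp [Fintype.sum_sum_type, adj, Fintype.sum_prod_type, ← sub_eq_iff_eq_add]

lemma inCode_iff (x : VN F → K) :
    InCode F K x ↔
      x (Sum.inl ()) + ∑ j : F, x (Sum.inr (Sum.inl j)) = 0 ∧
      (∀ k : F, x (Sum.inl ()) + ∑ j : F, x (Sum.inr (Sum.inr (k, j))) = 0) ∧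
      ∀ a b : F,
        x (Sum.inr (Sum.inl a)) + ∑ i : F, x (Sum.inr (Sum.inr (i, b - i * a))) = 0 := by
  refine ⟨fun h => ⟨?_, fun k => ?_, fun a b => ?_⟩, fun ⟨h₁, h₂, h₃⟩ c => ?_⟩
  · rw [← sum_adj_inl]; exact h _
  · rw [← sum_adj_inr_inl]; exact h _
  · rw [← sum_adj_inr_inr]; exact h _
  · rcases c with _ | k | ⟨a, b⟩
    · rw [sum_adj_inl]; exact h₁
    · rw [sum_adj_inr_inl]; exact h₂ k
    · rw [sum_adj_inr_inr]; exact h₃ a b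

lemma dmin_eq {n : ℕ} (hle : ∀ x, InCode F K x → x ≠ 0 → n ≤ hamWt x)
    (hex : ∃ x, InCode F K x ∧ x ≠ 0 ∧ hamWt x = n) : dmin F K = n := by
  rw [dmin]
  refine le_antisymm (Nat.sInf_le hex) ?_
  obtain ⟨x, hx, hne, hw⟩ := Nat.sInf_mem
    (⟨n, hex⟩ : {w | ∃ x : VN F → K, InCode F K x ∧ x ≠ 0 ∧ hamWt x = w}.Nonempty)
  exact hw ▸ hle x hx hne

end Code

section Weight

variable {F : Type*} [Fintype F] {K : Type*} [Zero K]

noncomputable def lineSupport (x : VN F → K) : Finset F :=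
  univ.filter fun j => x (Sum.inr (Sum.inl j)) ≠ 0

noncomputable def planeSupport (x : VN F → K) : Finset (F × F) :=
  univ.filter fun p => x (Sum.inr (Sum.inr p)) ≠ 0

lemma hamWt_eq (x : VN F → K) :
    hamWt x = (if x (Sum.inl ()) = 0 then 0 else 1) + #(lineSupport x) + #(planeSupport x) := by
  rw [hamWt, Nat.card_eq_fintype_card, Fintype.card_subtype, card_filter,
    Fintype.sum_sum_type, Fintype.sum_sum_type, lineSupport, planeSupport, card_filter, card_filter]
  simp [add_assoc, ite_not]

end Weight

section LowerBound

variable {K : Type*} [AddCommMonoid K]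

lemma ne_zero_of_add_eq_zero_of_ne_zero {a b : K} (h : a + b = 0) (ha : a ≠ 0) : b ≠ 0 :=
  fun hb => ha (by simpa [hb] using h)

lemma exists_ne_ne_zero_of_sum_eq_zero {ι : Type*} [Fintype ι] {f : ι → K}
    (h : ∑ i, f i = 0) {i₀ : ι} (h₀ : f i₀ ≠ 0) : ∃ i ≠ i₀, f i ≠ 0 := by
  by_contra! hf
  exact h₀ (by rwa [Fintype.sum_eq_single i₀ hf] at h)

lemma card_le_card_of_injective_of_mem {α β : Type*} [Fintype α] {t : Finset β} {f : α → β}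
    (hf : Function.Injective f) (ht : ∀ a, f a ∈ t) : Fintype.card α ≤ #t := by
  simpa using card_le_card_of_injOn f (s := univ) (fun a _ => ht a) hf.injOn

variable {F : Type*} [Field F] [Fintype F] {x : VN F → K}

lemma card_supports_of_root_ne_zero (hx : InCode F K x) (hr : x (Sum.inl ()) ≠ 0) :
    1 ≤ #(lineSupport x) ∧ Fintype.card F ≤ #(planeSupport x) := by
  obtain ⟨hcx, hc, -⟩ := (inCode_iff x).1 hx
  obtain ⟨j, -, hj⟩ := exists_ne_zero_of_sum_ne_zero (ne_zero_of_add_eq_zero_of_ne_zero hcx hr)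
  have hrow (i : F) : ∃ j, x (Sum.inr (Sum.inr (i, j))) ≠ 0 := by
    obtain ⟨j, -, hj⟩ :=
      exists_ne_zero_of_sum_ne_zero (ne_zero_of_add_eq_zero_of_ne_zero (hc i) hr)
    exact ⟨j, hj⟩
  choose ψ hψ using hrow
  refine ⟨card_pos.2 ⟨j, by simpa [lineSupport] using hj⟩, ?_⟩
  exact card_le_card_of_injective_of_mem (f := fun i => (i, ψ i))
    (fun i i' h => congrArg Prod.fst h) fun i => by simpa [planeSupport] using hψ i

lemma card_supports_of_line_ne_zero (hx : InCode F K x) (hr : x (Sum.inl ()) = 0)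
    {a : F} (ha : x (Sum.inr (Sum.inl a)) ≠ 0) :
    2 ≤ #(lineSupport x) ∧ Fintype.card F ≤ #(planeSupport x) := by
  obtain ⟨hcx, -, hab⟩ := (inCode_iff x).1 hx
  rw [hr, zero_add] at hcx
  obtain ⟨a', ha'a, ha'⟩ := exists_ne_ne_zero_of_sum_eq_zero hcx ha
  have hline (b : F) : ∃ i, x (Sum.inr (Sum.inr (i, b - i * a))) ≠ 0 := by
    obtain ⟨i, -, hi⟩ :=
      exists_ne_zero_of_sum_ne_zero (ne_zero_of_add_eq_zero_of_ne_zero (hab a b) ha)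
    exact ⟨i, hi⟩
  choose ψ hψ using hline
  refine ⟨one_lt_card.2 ⟨a, by simpa [lineSupport] using ha, a',
    by simpa [lineSupport] using ha', ha'a.symm⟩, ?_⟩
  refine card_le_card_of_injective_of_mem (f := fun b => (ψ b, b - ψ b * a)) (fun b b' h => ?_)
    fun b => by simpa [planeSupport] using hψ b
  simp only [Prod.mk.injEq] at h
  rw [h.1] at h
  simpa using h.2

lemma card_add_two_le_card_planeSupport (hx : InCode F K x) (hr : x (Sum.inl ()) = 0)
    (hl : ∀ a, x (Sum.inr (Sum.inl a)) = 0) {i₀ j₀ : F}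
    (h₀ : x (Sum.inr (Sum.inr (i₀, j₀))) ≠ 0) :
    Fintype.card F + 2 ≤ #(planeSupport x) := by
  obtain ⟨-, hc, hab⟩ := (inCode_iff x).1 hx
  have hrow := hc i₀
  rw [hr, zero_add] at hrow
  obtain ⟨j₁, hj₁, h₁⟩ := exists_ne_ne_zero_of_sum_eq_zero hrow h₀
  have hline (a : F) :
      ∃ i ≠ i₀, x (Sum.inr (Sum.inr (i, j₀ + i₀ * a - i * a))) ≠ 0 := by
    have h := hab a (j₀ + i₀ * a)
    rw [hl, zero_add] at h
    exact exists_ne_ne_zero_of_sum_eq_zero h (by rwa [add_sub_cancel_right])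
  choose ψ hψ₀ hψ using hline
  have hcol : 2 ≤ #((planeSupport x).filter fun p => p.1 = i₀) :=
    one_lt_card.2 ⟨(i₀, j₀), by simpa [planeSupport] using h₀, (i₀, j₁),
      by simpa [planeSupport] using h₁, by simpa using hj₁.symm⟩
  have hoff : Fintype.card F ≤ #((planeSupport x).filter fun p => ¬p.1 = i₀) := by
    refine card_le_card_of_injective_of_mem (f := fun a => (ψ a, j₀ + i₀ * a - ψ a * a))
      (fun a a' h => ?_) fun a => by simpa [planeSupport] using ⟨hψ a, hψ₀ a⟩
    simp only [Prod.mk.injEq] at h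
    rw [h.1] at h
    refine mul_left_cancel₀ (sub_ne_zero.2 (hψ₀ a').symm) ?_
    linear_combination h.2
  have := card_filter_add_card_filter_not (s := planeSupport x) fun p => p.1 = i₀
  omega

theorem card_add_two_le_hamWt (hx : InCode F K x) (hne : x ≠ 0) :
    Fintype.card F + 2 ≤ hamWt x := by
  rw [hamWt_eq]
  by_cases hr : x (Sum.inl ()) = 0
  · by_cases hl : ∀ a, x (Sum.inr (Sum.inl a)) = 0
    · obtain ⟨⟨i₀, j₀⟩, h₀⟩ : ∃ p, x (Sum.inr (Sum.inr p)) ≠ 0 := by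
        by_contra! hp
        exact hne (funext fun v => by rcases v with ⟨⟩ | j | p <;> simp [hr, hl, hp])
      have := card_add_two_le_card_planeSupport hx hr hl h₀
      omega
    · obtain ⟨a, ha⟩ := not_forall.1 hl
      have := card_supports_of_line_ne_zero hx hr ha
      omega
  · have := card_supports_of_root_ne_zero hx hr
    simp only [hr, if_false]
    omega

end LowerBound

section Codeword

variable {F : Type*} [Field F]

-- Since `0⁻¹ = 0` in Lean, the point `(0, 0)` lies on the graph of `i ↦ c * i⁻¹`.
lemma cw_inr_inr (c i j : F) :
    cw F c (Sum.inr (Sum.inr (i, j))) = if j = c * i⁻¹ then 1 else 0 := by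
  by_cases hi : i = 0 <;> simp [cw, hi]

lemma cw_ne_zero (c : F) : cw F c ≠ 0 :=
  fun h => one_ne_zero (congrFun h (Sum.inl ()))

variable [Fintype F]

lemma hamWt_cw (c : F) : hamWt (cw F c) = Fintype.card F + 2 := by
  have hl : lineSupport (cw F c) = {0} := by
    ext j
    by_cases hj : j = 0 <;> simp [lineSupport, cw, hj]
  have hp : planeSupport (cw F c) = univ.image fun i => (i, c * i⁻¹) := by
    ext ⟨i, j⟩
    simp [planeSupport, cw_inr_inr, eq_comm]
  rw [hamWt_eq, hl, hp, card_image_of_injective _ fun i i' h => congrArg Prod.fst h]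
  simp [cw, add_comm]

lemma sum_boole_eq_one_of_bijective {α β R : Type*} [Fintype α] [AddCommMonoidWithOne R]
    {f : α → β} (hf : Function.Bijective f) (y : β) :
    (∑ i, if f i = y then (1 : R) else 0) = 1 := by
  obtain ⟨i₀, rfl⟩ := hf.2 y
  simp [hf.1.eq_iff]

variable [CharP F 2]

lemma sum_boole_quadratic_eq {c : F} (hc : c ≠ 0) (a b : F) :
    (∑ i : F, if a * i ^ 2 + b * i = c then (1 : ZMod 2) else 0)
      = (if a = 0 then 1 else 0) + (if b = 0 then 1 else 0) := by
  rcases eq_or_ne a 0 with rfl | ha <;> rcases eq_or_ne b 0 with rfl | hb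
  · simp [hc.symm, CharTwo.add_self_eq_zero]
  · simpa [hb] using sum_boole_eq_one_of_bijective (R := ZMod 2)
      (mul_right_injective₀ hb).bijective_of_finite c
  · have hsq : Function.Bijective fun i : F => i ^ 2 :=
      (frobenius_inj F 2).bijective_of_finite
    simpa [ha] using sum_boole_eq_one_of_bijective (R := ZMod 2)
      ((mul_right_injective₀ ha).bijective_of_finite.comp hsq) c
  · have hshift (i : F) : a * (i + b / a) ^ 2 + b * (i + b / a) = a * i ^ 2 + b * i := by
      field_simp
      linear_combination (a * i * b + b * b) * CharTwo.two_eq_zero (R := F)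
    simp only [ha, hb, if_false, add_zero]
    refine sum_ninvolution (fun i => i + b / a) (fun i => ?_) (fun i _ => ?_) (fun _ => mem_univ _)
      fun i => ?_
    · rw [hshift]; exact CharTwo.add_self_eq_zero _
    · simpa using div_ne_zero hb ha
    · rw [add_assoc, CharTwo.add_self_eq_zero, add_zero]

lemma sum_cw_line {c : F} (hc : c ≠ 0) (a b : F) :
    (∑ i : F, cw F c (Sum.inr (Sum.inr (i, b - i * a)))) = if a = 0 then 1 else 0 := by
  have hpt (i : F) : cw F c (Sum.inr (Sum.inr (i, b - i * a)))
      = (if i = 0 then (if b = 0 then 1 else 0) else 0)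
        + if a * i ^ 2 + b * i = c then 1 else 0 := by
    rw [cw_inr_inr]
    rcases eq_or_ne i 0 with rfl | hi
    · simp [hc.symm]
    · have h : (b - i * a) * i = a * i ^ 2 + b * i := by rw [CharTwo.sub_eq_add]; ring
      simp [hi, eq_mul_inv_iff_mul_eq₀ hi, h]
  simp only [hpt, sum_add_distrib, Fintype.sum_ite_eq', sum_boole_quadratic_eq hc]
  rw [add_left_comm, CharTwo.add_self_eq_zero, add_zero]

lemma cw_inCode {c : F} (hc : c ≠ 0) : InCode F (ZMod 2) (cw F c) := by
  refine (inCode_iff _).2 ⟨?_, fun k => ?_, fun a b => ?_⟩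
  · simp [cw, CharTwo.add_self_eq_zero]
  · simp only [cw_inr_inr, Fintype.sum_ite_eq']
    exact CharTwo.add_self_eq_zero (1 : ZMod 2)
  · rw [sum_cw_line hc]
    exact CharTwo.add_self_eq_zero _

end Codeword

end TypeII3

theorem stmt_10_general (s : ℕ)
    (F : Type*) [Field F] [Fintype F] (hF : Fintype.card F = 2 ^ s) :
    -- the binary code of P(2,s) has minimum distance exactly q + 2
    TypeII3.dmin F (ZMod 2) = 2 ^ s + 2 ∧
    -- and for every c ≠ 0 the given indicator vector is a codeword of weight q + 2
    (∀ c : F, c ≠ 0 →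
      TypeII3.InCode F (ZMod 2) (cw F c) ∧ hamWt (cw F c) = 2 ^ s + 2) := by
  have : CharP F 2 := charP_of_card_eq_prime_pow hF
  have hcw (c : F) (hc : c ≠ 0) :
      TypeII3.InCode F (ZMod 2) (cw F c) ∧ hamWt (cw F c) = 2 ^ s + 2 :=
    ⟨TypeII3.cw_inCode hc, hF ▸ TypeII3.hamWt_cw c⟩
  obtain ⟨c, hc⟩ := exists_ne (0 : F)
  exact ⟨TypeII3.dmin_eq (fun x hx hne => hF ▸ TypeII3.card_add_two_le_hamWt hx hne)
    ⟨cw F c, (hcw c hc).1, TypeII3.cw_ne_zero c, (hcw c hc).2⟩, hcw⟩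

theorem stmt_10 (s : ℕ) (hs : 0 < s)
    (F : Type*) [Field F] [Fintype F] (hF : Fintype.card F = 2 ^ s) :
    -- the binary code of P(2,s) has minimum distance exactly q + 2
    TypeII3.dmin F (ZMod 2) = 2 ^ s + 2 ∧
    -- and for every c ≠ 0 the given indicator vector is a codeword of weight q + 2
    (∀ c : F, c ≠ 0 →
      TypeII3.InCode F (ZMod 2) (cw F c) ∧ hamWt (cw F c) = 2 ^ s + 2) :=
  stmt_10_general s F hF
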